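/- arXiv:2110.08530 — 4 statements merged into one kernel-verified Lean document; each statement's English description precedes it below -/
import Mathlib

section
/- Let O ⊆ ℝⁿ be open, let f₁, f₂ : O → ℝⁿ be C¹ vector fields, let h : O → ℝ be of class C², and let φ : O → ℝⁿ be a C² diffeomorphism onto its (open) image. Define the transformed data on φ(O) by h̃ := h ∘ φ⁻¹ and f̃ᵢ(φ(x)) := Dφ(x) fᵢ(x) for i = 1,2. Let S(x) be the 2×2 symmetric matrix with entries S_{ℓm}(x) = ½ ∇h(x)·(Df_ℓ(x) f_m(x) + Df_m(x) f_ℓ(x)) + f_ℓ(x)·D²h(x) f_m(x), and let S̃ be defined in the same way from h̃, f̃₁, f̃₂. Then S̃(φ(x)) = S(x) for every x ∈ O. -/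
open MeasureTheory Set

noncomputable section

/-- `n`-dimensional Euclidean space. -/
abbrev Euc (n : ℕ) : Type := EuclideanSpace ℝ (Fin n)

/-- The Lie bracket `[f₁, f₂] := Df₂ f₁ − Df₁ f₂`. -/
def lieBracket {n : ℕ} (f₁ f₂ : Euc n → Euc n) (x : Euc n) : Euc n :=
  fderiv ℝ f₂ x (f₁ x) - fderiv ℝ f₁ x (f₂ x)

/-- Entries of the matrix `S(x)`:
`S_{ℓm}(x) = ½ ∇h(x)·(Df_ℓ(x) f_m(x) + Df_m(x) f_ℓ(x)) + f_ℓ(x)·D²h(x) f_m(x)`. -/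
def Smat {n : ℕ} (f₁ f₂ : Euc n → Euc n) (h : Euc n → ℝ) (x : Euc n) (l m : Fin 2) : ℝ :=
  (1 / 2) * fderiv ℝ h x (fderiv ℝ (![f₁, f₂] l) x (![f₁, f₂] m x)
      + fderiv ℝ (![f₁, f₂] m) x (![f₁, f₂] l x))
    + fderiv ℝ (fun y => fderiv ℝ h y (![f₁, f₂] m x)) x (![f₁, f₂] l x)

/-- The quadratic form `𝐒(x)` associated to the symmetric matrix `S(x)`. -/
def Sform {n : ℕ} (f₁ f₂ : Euc n → Euc n) (h : Euc n → ℝ) (x : Euc n) (w : Fin 2 → ℝ) : ℝ :=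
  ∑ l : Fin 2, ∑ m : Fin 2, Smat f₁ f₂ h x l m * w l * w m

/-- The singular set `𝕊 = {x ∈ C : ∇h·f₁ = ∇h·f₂ = 0}`. -/
def singSet {n : ℕ} (f₁ f₂ : Euc n → Euc n) (h : Euc n → ℝ) : Set (Euc n) :=
  {x | h x ≤ 0 ∧ fderiv ℝ h x (f₁ x) = 0 ∧ fderiv ℝ h x (f₂ x) = 0}

/-- Hypothesis (H1): `f₁, f₂` are `C²`, Lipschitz with a common constant, and
`‖f₁ x‖ + ‖f₂ x‖` is uniformly bounded. -/
def H1 {n : ℕ} (f₁ f₂ : Euc n → Euc n) : Prop :=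
  ContDiff ℝ 2 f₁ ∧ ContDiff ℝ 2 f₂ ∧
    (∃ kf : NNReal, LipschitzWith kf f₁ ∧ LipschitzWith kf f₂) ∧
    ∃ k₀ : ℝ, ∀ x, ‖f₁ x‖ + ‖f₂ x‖ ≤ k₀

/-- Hypothesis (H3): `h` is `C^{2,1}`, Lipschitz, `C = {h ≤ 0}` is nonempty and
`∇h ≠ 0` on `{h = 0}`. -/
def H3 {n : ℕ} (h : Euc n → ℝ) : Prop :=
  ContDiff ℝ 2 h ∧ (∃ M : NNReal, LipschitzWith M (iteratedFDeriv ℝ 2 h)) ∧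
    (∃ kh : NNReal, LipschitzWith kh h) ∧ (∃ x, h x ≤ 0) ∧
    ∀ x, h x = 0 → fderiv ℝ h x ≠ 0

/-- Hypothesis (H4): transversality of the Lie bracket on the singular set. -/
def H4 {n : ℕ} (f₁ f₂ : Euc n → Euc n) (h : Euc n → ℝ) : Prop :=
  ∃ α > 0, ∀ x ∈ singSet f₁ f₂ h, α < |fderiv ℝ h x (lieBracket f₁ f₂ x)|

/-- Hypothesis (H5): on the singular set, `𝐒(x)` is negative semidefinite or indefinite. -/
def H5 {n : ℕ} (f₁ f₂ : Euc n → Euc n) (h : Euc n → ℝ) : Prop :=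
  ∀ x ∈ singSet f₁ f₂ h,
    (∀ w : Fin 2 → ℝ, Sform f₁ f₂ h x w ≤ 0) ∨
      ((∃ w : Fin 2 → ℝ, Sform f₁ f₂ h x w < 0) ∧ (∃ w : Fin 2 → ℝ, 0 < Sform f₁ f₂ h x w))

/-- Hypothesis (H6): near the singular set,
`√((∇h·f₁)² + (∇h·f₂)²) ≥ d₀ · dist(x, 𝕊)`. -/
def H6 {n : ℕ} (f₁ f₂ : Euc n → Euc n) (h : Euc n → ℝ) : Prop :=
  ∃ δ > 0, ∃ d₀ > 0, ∀ x : Euc n, Metric.infDist x (singSet f₁ f₂ h) ≤ δ →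
    d₀ * Metric.infDist x (singSet f₁ f₂ h) ≤
      Real.sqrt ((fderiv ℝ h x (f₁ x)) ^ 2 + (fderiv ℝ h x (f₂ x)) ^ 2)

/-!
Writing `L_f h := Dh · f` for the Lie derivative, symmetry of `D²h` gives
`S_{ℓm} = ½ (L_{f_m} L_{f_ℓ} h + L_{f_ℓ} L_{f_m} h)`. The chain rule together with
`Dψ(φ x) ∘ Dφ(x) = id` shows `L_{f̃} h̃ = (L_f h) ∘ ψ` on `φ(O)`; applying this twice, the
second time to `L_f h` in place of `h`, gives `L_{f̃_m} L_{f̃_ℓ} h̃ = (L_{f_m} L_{f_ℓ} h) ∘ ψ`.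
-/

open Filter Topology

section LieDerivative

variable {E F : Type*} [NormedAddCommGroup E] [NormedSpace ℝ E]
  [NormedAddCommGroup F] [NormedSpace ℝ F]

def lieDeriv (f : E → E) (h : E → F) (y : E) : F :=
  fderiv ℝ h y (f y)

/-- `ψ` plays the role of `φ⁻¹`. -/
def pushforward (φ ψ : E → E) (f : E → E) (y : E) : E :=
  fderiv ℝ φ (ψ y) (f (ψ y))

lemma ContDiffAt.differentiableAt_fderiv {f : E → F} {x : E} (hf : ContDiffAt ℝ 2 f x) :
    DifferentiableAt ℝ (fderiv ℝ f) x :=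
  (hf.fderiv_right (m := 1) (by norm_num)).differentiableAt one_ne_zero

lemma DifferentiableAt.lieDeriv {f : E → E} {h : E → F} {x : E}
    (hh : DifferentiableAt ℝ (fderiv ℝ h) x) (hf : DifferentiableAt ℝ f x) :
    DifferentiableAt ℝ (lieDeriv f h) x :=
  hh.clm_apply hf

lemma DifferentiableAt.pushforward {φ ψ f : E → E} {y : E}
    (hφ : DifferentiableAt ℝ (fderiv ℝ φ) (ψ y)) (hf : DifferentiableAt ℝ f (ψ y))
    (hψ : DifferentiableAt ℝ ψ y) :
    DifferentiableAt ℝ (pushforward φ ψ f) y :=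
  (hφ.clm_apply hf).comp y hψ

lemma fderiv_lieDeriv_apply {f : E → E} {h : E → F} {x : E}
    (hh : DifferentiableAt ℝ (fderiv ℝ h) x) (hf : DifferentiableAt ℝ f x) (v : E) :
    fderiv ℝ (lieDeriv f h) x v
      = fderiv ℝ (fderiv ℝ h) x v (f x) + fderiv ℝ h x (fderiv ℝ f x v) := by
  unfold lieDeriv
  rw [fderiv_clm_apply hh hf]
  simp only [add_apply, ContinuousLinearMap.comp_apply, ContinuousLinearMap.flip_apply]
  exact add_comm _ _

lemma half_lieDeriv_lieDeriv_add_lieDeriv_lieDeriv {f g : E → E} {h : E → ℝ} {x : E}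
    (hh : ContDiffAt ℝ 2 h x) (hf : DifferentiableAt ℝ f x) (hg : DifferentiableAt ℝ g x) :
    (1 / 2) * (lieDeriv g (lieDeriv f h) x + lieDeriv f (lieDeriv g h) x)
      = (1 / 2) * fderiv ℝ h x (fderiv ℝ f x (g x) + fderiv ℝ g x (f x))
        + fderiv ℝ (fun y => fderiv ℝ h y (g x)) x (f x) := by
  have hh' := hh.differentiableAt_fderiv
  have hsymm : fderiv ℝ (fderiv ℝ h) x (g x) (f x) = fderiv ℝ (fderiv ℝ h) x (f x) (g x) :=
    hh.isSymmSndFDerivAt (by simp) _ _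
  have hconst : fderiv ℝ (fun y => fderiv ℝ h y (g x)) x (f x)
      = fderiv ℝ (fderiv ℝ h) x (f x) (g x) := by
    rw [fderiv_clm_apply hh' (differentiableAt_const _)]
    simp
  rw [lieDeriv, lieDeriv, fderiv_lieDeriv_apply hh' hf, fderiv_lieDeriv_apply hh' hg, hconst,
    hsymm, map_add]
  ring

variable {φ ψ : E → E} {x : E}

lemma fderiv_comp_fderiv_eq_id_of_leftInverse (hφ : DifferentiableAt ℝ φ x)
    (hψ : DifferentiableAt ℝ ψ (φ x)) (hinv : ψ ∘ φ =ᶠ[𝓝 x] id) :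
    (fderiv ℝ ψ (φ x)).comp (fderiv ℝ φ x) = ContinuousLinearMap.id ℝ E := by
  rw [← fderiv_comp x hψ hφ, hinv.fderiv_eq, fderiv_id]

lemma lieDeriv_pushforward_comp_apply {f : E → E} {h : E → F}
    (hh : DifferentiableAt ℝ h x) (hφ : DifferentiableAt ℝ φ x)
    (hψ : DifferentiableAt ℝ ψ (φ x)) (hinv : ψ ∘ φ =ᶠ[𝓝 x] id) :
    lieDeriv (pushforward φ ψ f) (h ∘ ψ) (φ x) = lieDeriv f h x := by
  have hψφ : ψ (φ x) = x := hinv.eq_of_nhds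
  rw [← hψφ] at hh
  rw [lieDeriv, pushforward, fderiv_comp (φ x) hh hψ, ContinuousLinearMap.comp_apply, hψφ,
    ← ContinuousLinearMap.comp_apply (fderiv ℝ ψ (φ x)),
    fderiv_comp_fderiv_eq_id_of_leftInverse hφ hψ hinv, ContinuousLinearMap.id_apply, lieDeriv]

variable {O : Set E} (hO : IsOpen O) (hφO : IsOpen (φ '' O))
  (hφ : DifferentiableOn ℝ φ O) (hψ : DifferentiableOn ℝ ψ (φ '' O))
  (hinv : ∀ z ∈ O, ψ (φ z) = z)
include hO hφO hφ hψ hinv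

lemma lieDeriv_pushforward_comp_eventuallyEq {f : E → E} {h : E → F}
    (hh : DifferentiableOn ℝ h O) (hx : x ∈ O) :
    lieDeriv (pushforward φ ψ f) (h ∘ ψ) =ᶠ[𝓝 (φ x)] lieDeriv f h ∘ ψ := by
  filter_upwards [hφO.mem_nhds ⟨x, hx, rfl⟩]
  rintro _ ⟨z, hz, rfl⟩
  have hinv_z : ψ ∘ φ =ᶠ[𝓝 z] id := eventually_of_mem (hO.mem_nhds hz) hinv
  rw [Function.comp_apply, hinv z hz]
  exact lieDeriv_pushforward_comp_apply (hh.differentiableAt (hO.mem_nhds hz))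
    (hφ.differentiableAt (hO.mem_nhds hz)) (hψ.differentiableAt (hφO.mem_nhds ⟨z, hz, rfl⟩))
    hinv_z

lemma lieDeriv_lieDeriv_pushforward_comp {f g : E → E} {h : E → F}
    (hh : DifferentiableOn ℝ h O) (hfh : DifferentiableAt ℝ (lieDeriv f h) x) (hx : x ∈ O) :
    lieDeriv (pushforward φ ψ g) (lieDeriv (pushforward φ ψ f) (h ∘ ψ)) (φ x)
      = lieDeriv g (lieDeriv f h) x := by
  rw [lieDeriv, (lieDeriv_pushforward_comp_eventuallyEq hO hφO hφ hψ hinv hh hx).fderiv_eq]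
  exact lieDeriv_pushforward_comp_apply hfh (hφ.differentiableAt (hO.mem_nhds hx))
    (hψ.differentiableAt (hφO.mem_nhds ⟨x, hx, rfl⟩)) (eventually_of_mem (hO.mem_nhds hx) hinv)

end LieDerivative

lemma Smat_eq_half_lieDeriv_lieDeriv {n : ℕ} {f₁ f₂ : Euc n → Euc n} {h : Euc n → ℝ}
    {x : Euc n} (hh : ContDiffAt ℝ 2 h x) (hf : ∀ i, DifferentiableAt ℝ (![f₁, f₂] i) x)
    (l m : Fin 2) :
    Smat f₁ f₂ h x l m = (1 / 2) * (lieDeriv (![f₁, f₂] m) (lieDeriv (![f₁, f₂] l) h) x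
      + lieDeriv (![f₁, f₂] l) (lieDeriv (![f₁, f₂] m) h) x) :=
  (half_lieDeriv_lieDeriv_add_lieDeriv_lieDeriv hh (hf l) (hf m)).symm

theorem Smat_invariant_under_coordinate_change_general {n : ℕ}
    (O : Set (Euc n)) (hO : IsOpen O)
    (f₁ f₂ : Euc n → Euc n) (h : Euc n → ℝ) (φ ψ : Euc n → Euc n)
    (hf₁ : ContDiffOn ℝ 1 f₁ O) (hf₂ : ContDiffOn ℝ 1 f₂ O)
    (hh : ContDiffOn ℝ 2 h O)
    (hφ : ContDiffOn ℝ 2 φ O) (hφO : IsOpen (φ '' O))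
    (hψ : ContDiffOn ℝ 2 ψ (φ '' O))
    (hinv₁ : ∀ x ∈ O, ψ (φ x) = x)
    (x : Euc n) (hx : x ∈ O) (l m : Fin 2) :
    Smat (fun y => fderiv ℝ φ (ψ y) (f₁ (ψ y))) (fun y => fderiv ℝ φ (ψ y) (f₂ (ψ y)))
        (h ∘ ψ) (φ x) l m
      = Smat f₁ f₂ h x l m := by
  have hxO := hO.mem_nhds hx
  have hψφ : ψ (φ x) = x := hinv₁ x hx
  have hh₂ : ContDiffAt ℝ 2 h x := hh.contDiffAt hxO
  have hψ₂ : ContDiffAt ℝ 2 ψ (φ x) := hψ.contDiffAt (hφO.mem_nhds ⟨x, hx, rfl⟩)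
  have hf : ∀ i, DifferentiableAt ℝ (![f₁, f₂] i) x := Fin.forall_fin_two.2
    ⟨(hf₁.contDiffAt hxO).differentiableAt one_ne_zero,
      (hf₂.contDiffAt hxO).differentiableAt one_ne_zero⟩
  have hpush : ∀ i, ![pushforward φ ψ f₁, pushforward φ ψ f₂] i
      = pushforward φ ψ (![f₁, f₂] i) := Fin.forall_fin_two.2 ⟨rfl, rfl⟩
  have hpush_diff (i : Fin 2) :
      DifferentiableAt ℝ (![pushforward φ ψ f₁, pushforward φ ψ f₂] i) (φ x) := by
    rw [hpush]
    refine .pushforward ?_ ?_ (hψ₂.differentiableAt two_ne_zero) <;> rw [hψφ]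
    · exact (hφ.contDiffAt hxO).differentiableAt_fderiv
    · exact hf i
  have hhψ₂ : ContDiffAt ℝ 2 (h ∘ ψ) (φ x) := (hψφ ▸ hh₂).comp (φ x) hψ₂
  have hlie (i j : Fin 2) := lieDeriv_lieDeriv_pushforward_comp (f := ![f₁, f₂] i)
    (g := ![f₁, f₂] j) hO hφO (hφ.differentiableOn two_ne_zero) (hψ.differentiableOn two_ne_zero)
    hinv₁ (hh.differentiableOn two_ne_zero) (hh₂.differentiableAt_fderiv.lieDeriv (hf i)) hx
  change Smat (pushforward φ ψ f₁) (pushforward φ ψ f₂) (h ∘ ψ) (φ x) l m = _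
  rw [Smat_eq_half_lieDeriv_lieDeriv hhψ₂ hpush_diff, Smat_eq_half_lieDeriv_lieDeriv hh₂ hf,
    hpush, hpush, hlie, hlie]

/-- **Invariance of the matrix `S` under coordinate changes.**
Let `O ⊆ ℝⁿ` be open, `f₁, f₂` be `C¹` vector fields on `O`, `h` be `C²` on `O`, and let
`φ` be a `C²` diffeomorphism of `O` onto its open image, with inverse `ψ`. Transform the
data by `h̃ = h ∘ ψ` and `f̃ᵢ(φ x) = Dφ(x) fᵢ(x)`, i.e. `f̃ᵢ(y) = Dφ(ψ y) fᵢ(ψ y)`.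
Then `S̃(φ x) = S(x)` entrywise, for every `x ∈ O`. -/
theorem Smat_invariant_under_coordinate_change {n : ℕ}
    (O : Set (Euc n)) (hO : IsOpen O)
    (f₁ f₂ : Euc n → Euc n) (h : Euc n → ℝ) (φ ψ : Euc n → Euc n)
    (hf₁ : ContDiffOn ℝ 1 f₁ O) (hf₂ : ContDiffOn ℝ 1 f₂ O)
    (hh : ContDiffOn ℝ 2 h O)
    (hφ : ContDiffOn ℝ 2 φ O) (hφO : IsOpen (φ '' O))
    (hψ : ContDiffOn ℝ 2 ψ (φ '' O))
    (hinv₁ : ∀ x ∈ O, ψ (φ x) = x) (hinv₂ : ∀ y ∈ φ '' O, φ (ψ y) = y)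
    (x : Euc n) (hx : x ∈ O) (l m : Fin 2) :
    Smat (fun y => fderiv ℝ φ (ψ y) (f₁ (ψ y))) (fun y => fderiv ℝ φ (ψ y) (f₂ (ψ y)))
        (h ∘ ψ) (φ x) l m
      = Smat f₁ f₂ h x l m :=
  Smat_invariant_under_coordinate_change_general O hO f₁ f₂ h φ ψ hf₁ hf₂ hh hφ hφO hψ hinv₁ x hx l
    m

end
end

section
/- Let λ > 0, p ≥ 3/2, and define h : ℝ³ → ℝ by h(x₁,x₂,x₃) := λ(x₁² + x₂²)^p + x₃. Let ω < −6λ and let x(t) := (sin(ωt)/ω, (1 − cos(ωt))/ω, (ωt − sin(ωt))/ω²) be the trajectory of Brockett's non-holonomic integrator under the control (cos ωt, sin ωt) starting at the origin. Then there exists t̄ > 0 such that h(x(t)) ≤ 0 for all t ∈ [0, t̄]. -/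
noncomputable section

/-- The first vector field of Brockett's non-holonomic integrator: `f₁(x) = (1, 0, −x₂)`. -/
def brockF₁ (p : ℝ × ℝ × ℝ) : ℝ × ℝ × ℝ := (1, 0, -p.2.1)

/-- The second vector field of Brockett's non-holonomic integrator: `f₂(x) = (0, 1, x₁)`. -/
def brockF₂ (p : ℝ × ℝ × ℝ) : ℝ × ℝ × ℝ := (0, 1, p.1)

/-- The trajectory of Brockett's non-holonomic integrator starting at the origin under the
rotational control `(cos ωt, sin ωt)`. -/
def brockTraj (ω : ℝ) (t : ℝ) : ℝ × ℝ × ℝ :=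
  (Real.sin (ω * t) / ω, (1 - Real.cos (ω * t)) / ω,
    (ω * t - Real.sin (ω * t)) / ω ^ 2)

/-- The constraint function `h(x) = λ(x₁² + x₂²)^p + x₃`. -/
def brockCon (lam p : ℝ) (x : ℝ × ℝ × ℝ) : ℝ := lam * (x.1 ^ 2 + x.2.1 ^ 2) ^ p + x.2.2

/-!
Along the spiral the planar part has squared radius `2(1 - cos ωt)/ω² ≤ t²`, so for `t ≤ 1`
and `p ≥ 3/2` the first term of `h` is at most `λ t³`, while the Taylor bound for `sin` makes the
vertical coordinate at most `ω t³/6 + O(t⁴)`. Hence `h(x(t)) ≤ t³ (λ + ω/6 + O(t))`, which is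
nonpositive for small `t` exactly because `ω < −6λ`.
-/

open Real

lemma sub_sin_le {x : ℝ} (hx : |x| ≤ 1) : x - sin x ≤ x ^ 3 / 6 + x ^ 4 / 100 := by
  have hfive : |x| ^ 5 ≤ x ^ 4 := by
    calc |x| ^ 5 = |x| ^ 4 * |x| := pow_succ _ _
      _ ≤ |x| ^ 4 * 1 := by gcongr
      _ = x ^ 4 := by rw [mul_one, pow_abs, abs_of_nonneg (by positivity)]
  linarith [(abs_le.mp (sin_bound hx)).1]

lemma sq_add_sq_brockTraj_le (ω t : ℝ) :
    (brockTraj ω t).1 ^ 2 + (brockTraj ω t).2.1 ^ 2 ≤ t ^ 2 := by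
  rcases eq_or_ne ω 0 with rfl | hω
  · simpa [brockTraj] using sq_nonneg t
  have hradius : (brockTraj ω t).1 ^ 2 + (brockTraj ω t).2.1 ^ 2
      = 2 * (1 - cos (ω * t)) / ω ^ 2 := by
    simp only [brockTraj]
    field_simp
    linear_combination sin_sq_add_cos_sq (ω * t)
  rw [hradius, div_le_iff₀ (by positivity)]
  linarith [one_sub_sq_div_two_le_cos (x := ω * t)]

lemma brockTraj_vertical_le {ω t : ℝ} (hωt : |ω * t| ≤ 1) :
    (brockTraj ω t).2.2 ≤ ω * t ^ 3 / 6 + ω ^ 2 * t ^ 4 / 100 := by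
  rcases eq_or_ne ω 0 with rfl | hω
  · simp [brockTraj]
  calc (brockTraj ω t).2.2 ≤ ((ω * t) ^ 3 / 6 + (ω * t) ^ 4 / 100) / ω ^ 2 := by
        show (ω * t - sin (ω * t)) / ω ^ 2 ≤ _
        gcongr
        exact sub_sin_le hωt
    _ = ω * t ^ 3 / 6 + ω ^ 2 * t ^ 4 / 100 := by field_simp

lemma rpow_le_pow_three_of_le_sq {r t p : ℝ} (hr : 0 ≤ r) (hrt : r ≤ t ^ 2) (ht0 : 0 ≤ t)
    (ht1 : t ≤ 1) (hp : 3 / 2 ≤ p) : r ^ p ≤ t ^ 3 :=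
  calc r ^ p ≤ (t ^ 2) ^ p := rpow_le_rpow hr hrt (by linarith)
    _ = t ^ (2 * p) := by rw [← rpow_natCast t 2, ← rpow_mul ht0]; norm_num
    _ ≤ t ^ (3 : ℝ) := rpow_le_rpow_of_exponent_ge' ht0 ht1 (by norm_num) (by linarith)
    _ = t ^ 3 := by norm_cast

lemma brockCon_brockTraj_le {lam p ω t : ℝ} (hlam : 0 ≤ lam) (hp : 3 / 2 ≤ p) (ht0 : 0 ≤ t)
    (ht1 : t ≤ 1) (hωt : |ω * t| ≤ 1) :
    brockCon lam p (brockTraj ω t) ≤ t ^ 3 * (lam + ω / 6 + ω ^ 2 * t / 100) := by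
  have hplanar := rpow_le_pow_three_of_le_sq (by positivity) (sq_add_sq_brockTraj_le ω t) ht0 ht1 hp
  have hvertical := brockTraj_vertical_le hωt
  unfold brockCon
  linarith [mul_le_mul_of_nonneg_left hplanar hlam]

/-- **Feasibility of the spiral for `p ≥ 3/2`.** Let `λ > 0`, `p ≥ 3/2`,
`h(x) = λ(x₁² + x₂²)^p + x₃`, and `ω < −6λ`. Then the trajectory of Brockett's
non-holonomic integrator under the control `(cos ωt, sin ωt)` starting at the origin
satisfies `h(x(t)) ≤ 0` for all `t` in some interval `[0, t̄]` with `t̄ > 0`. -/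
theorem brockett_spiral_feasible (lam p ω : ℝ) (hlam : 0 < lam)
    (hp : 3 / 2 ≤ p) (hω : ω < -6 * lam) :
    ∃ tbar > 0, ∀ t ∈ Set.Icc (0:ℝ) tbar, brockCon lam p (brockTraj ω t) ≤ 0 := by
  have hω0 : ω < 0 := by linarith
  have hgap : 0 < -(ω + 6 * lam) := by linarith
  have hω2 : 0 < ω ^ 2 := by nlinarith
  refine ⟨min (min 1 (-1 / ω)) (-(ω + 6 * lam) * 50 / (3 * ω ^ 2)), ?_, ?_⟩
  · exact lt_min (lt_min one_pos (div_pos_of_neg_of_neg (by norm_num) hω0)) (by positivity)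
  rintro t ⟨ht0, ht⟩
  have ht1 : t ≤ 1 := ht.trans ((min_le_left _ _).trans (min_le_left _ _))
  have hωt : |ω * t| ≤ 1 := by
    have := ht.trans ((min_le_left _ _).trans (min_le_right _ _))
    rw [le_div_iff_of_neg hω0] at this
    rw [abs_le]
    constructor <;> nlinarith
  have hfactor : lam + ω / 6 + ω ^ 2 * t / 100 ≤ 0 := by
    have := ht.trans (min_le_right _ _)
    rw [le_div_iff₀ (by positivity)] at this
    linarith
  exact (brockCon_brockTraj_le hlam.le hp ht0 ht1 hωt).trans
    (mul_nonpos_of_nonneg_of_nonpos (by positivity) hfactor)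

end
end

section
/- Let λ > 0, 0 < p < 3/2, and define h : ℝ³ → ℝ by h(x₁,x₂,x₃) := λ(x₁² + x₂²)^p + x₃. Let ω ≠ 0 and let x(t) := (sin(ωt)/ω, (1 − cos(ωt))/ω, (ωt − sin(ωt))/ω²) be the trajectory of Brockett's non-holonomic integrator under the control (cos ωt, sin ωt) starting at the origin. Then there exists t̄ > 0 such that h(x(t)) > 0 for all t ∈ (0, t̄]; i.e., for p < 3/2 the spiralling trajectory violates the constraint h ≤ 0 immediately, no matter how the angular velocity ω is chosen. -/
/-!
Along the spiral, `x₁² + x₂² = 2(1 - cos ωt)/ω² ≥ (2t/π)²` as long as `|ωt| ≤ π`, whereas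
`|x₃| = |ωt - sin ωt|/ω² ≤ |ω| t³/6`. Hence `h(x(t)) ≥ c t^(2p) - C t³`, which is positive for
small `t > 0` because `2p < 3`.
-/

noncomputable section

open Real Filter Topology Set

lemma neg_abs_pow_three_div_six_le_sub_sin (u : ℝ) : -(|u| ^ 3 / 6) ≤ u - sin u := by
  rcases le_or_gt 0 u with hu | hu
  · linarith [sin_le hu, pow_nonneg (abs_nonneg u) 3]
  · have h := sin_gt_sub_cube (neg_pos.2 hu)
    rw [sin_neg, abs_of_neg hu] at *
    linarith

lemma eventually_mul_rpow_lt_mul_rpow {A B q r : ℝ} (hA : 0 < A) (hqr : q < r) :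
    ∀ᶠ t in 𝓝[>] 0, B * t ^ r < A * t ^ q := by
  have hlim : Tendsto (fun t : ℝ => B * t ^ (r - q)) (𝓝[>] 0) (𝓝 0) := by
    have h := (continuous_rpow_const (sub_nonneg.2 hqr.le)).tendsto 0
    rw [zero_rpow (sub_ne_zero.2 hqr.ne')] at h
    simpa using (h.mono_left nhdsWithin_le_nhds).const_mul B
  filter_upwards [hlim.eventually_lt_const hA, self_mem_nhdsWithin] with t ht (ht0 : 0 < t)
  calc B * t ^ r = B * t ^ (r - q) * t ^ q := by rw [mul_assoc, ← rpow_add ht0, sub_add_cancel]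
    _ < A * t ^ q := mul_lt_mul_of_pos_right ht (rpow_pos_of_pos ht0 q)

lemma brockTraj_radius_sq (ω t : ℝ) :
    (brockTraj ω t).1 ^ 2 + (brockTraj ω t).2.1 ^ 2 = 2 * (1 - cos (ω * t)) / ω ^ 2 := by
  simp only [brockTraj, div_pow, ← add_div]
  congr 1
  linear_combination sin_sq_add_cos_sq (ω * t)

lemma sq_le_brockTraj_radius_sq {ω t : ℝ} (hω : ω ≠ 0) (hωt : |ω * t| ≤ π) :
    (2 / π * t) ^ 2 ≤ (brockTraj ω t).1 ^ 2 + (brockTraj ω t).2.1 ^ 2 := by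
  rw [brockTraj_radius_sq, le_div_iff₀ (by positivity)]
  have hcos := cos_le_one_sub_mul_cos_sq hωt
  calc (2 / π * t) ^ 2 * ω ^ 2 = 2 * (2 / π ^ 2 * (ω * t) ^ 2) := by field_simp
    _ ≤ 2 * (1 - cos (ω * t)) := by linarith

lemma neg_le_brockTraj_height {ω t : ℝ} (ht : 0 ≤ t) :
    -(|ω| / 6 * t ^ 3) ≤ (brockTraj ω t).2.2 := by
  rcases eq_or_ne ω 0 with rfl | hω
  · simp [brockTraj]
  rw [brockTraj, le_div_iff₀ (by positivity)]
  calc -(|ω| / 6 * t ^ 3) * ω ^ 2 = -(|ω * t| ^ 3 / 6) := by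
        rw [abs_mul, abs_of_nonneg ht, ← sq_abs ω]; ring
    _ ≤ ω * t - sin (ω * t) := neg_abs_pow_three_div_six_le_sub_sin _

lemma brockCon_brockTraj_ge {lam p ω t : ℝ} (hlam : 0 ≤ lam) (hp : 0 ≤ p) (hω : ω ≠ 0)
    (ht : 0 ≤ t) (hωt : |ω * t| ≤ π) :
    lam * (2 / π) ^ (2 * p) * t ^ (2 * p) - |ω| / 6 * t ^ (3 : ℝ) ≤
      brockCon lam p (brockTraj ω t) := by
  have hradius : ((2 / π * t) ^ 2) ^ p ≤
      ((brockTraj ω t).1 ^ 2 + (brockTraj ω t).2.1 ^ 2) ^ p :=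
    rpow_le_rpow (by positivity) (sq_le_brockTraj_radius_sq hω hωt) hp
  have hpow : ((2 / π * t) ^ 2) ^ p = (2 / π) ^ (2 * p) * t ^ (2 * p) := by
    rw [← rpow_natCast, ← rpow_mul (by positivity), mul_rpow (by positivity) ht]
    norm_num
  rw [hpow] at hradius
  rw [brockCon, rpow_ofNat, mul_assoc]
  linarith [mul_le_mul_of_nonneg_left hradius hlam, neg_le_brockTraj_height (ω := ω) ht]

/-- **Infeasibility of the spiral for `p < 3/2`.** Let `λ > 0`, `0 < p < 3/2`,
`h(x) = λ(x₁² + x₂²)^p + x₃`, and `ω ≠ 0`. Then the trajectory of Brockett's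
non-holonomic integrator under the control `(cos ωt, sin ωt)` starting at the origin
violates the constraint immediately: `h(x(t)) > 0` for all `t` in some interval
`(0, t̄]` with `t̄ > 0`, no matter how `ω` is chosen. -/
theorem brockett_spiral_infeasible (lam p ω : ℝ) (hlam : 0 < lam)
    (hp0 : 0 < p) (hp : p < 3 / 2) (hω : ω ≠ 0) :
    ∃ tbar > 0, ∀ t ∈ Set.Ioc (0:ℝ) tbar, 0 < brockCon lam p (brockTraj ω t) := by
  have hsmall : ∀ᶠ t in 𝓝[>] (0 : ℝ), |ω * t| < π := by
    have h := (continuous_abs.comp (continuous_const_mul ω)).tendsto' 0 0 (by simp)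
    exact (h.mono_left nhdsWithin_le_nhds).eventually_lt_const pi_pos
  have hdominant := eventually_mul_rpow_lt_mul_rpow (B := |ω| / 6)
    (by positivity : 0 < lam * (2 / π) ^ (2 * p)) (by linarith : 2 * p < 3)
  have hspiral : ∀ᶠ t in 𝓝[>] 0, 0 < brockCon lam p (brockTraj ω t) := by
    filter_upwards [hdominant, hsmall, self_mem_nhdsWithin] with t hdom hωt (ht : 0 < t)
    exact (sub_pos.2 hdom).trans_le
      (brockCon_brockTraj_ge hlam.le hp0.le hω ht.le hωt.le)
  obtain ⟨tbar, htbar, hsub⟩ := mem_nhdsGT_iff_exists_Ioc_subset.1 hspiral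
  exact ⟨tbar, htbar, fun t ht => hsub ht⟩

end
end

section
/- Consider the control system (ẋ₁, ẋ₂) = (u, 0) in ℝ² with u(t) ∈ [−1,1], the constraint set C := {(x₁,x₂) : x₂ ≤ x₁²} (i.e. h(x₁,x₂) := x₂ − x₁² ≤ 0), and for ε ∈ (0, 1/2) the reference trajectory γ_ε(t) := (−ε + t, ε²) for t ∈ [0,1] (corresponding to the constant control u ≡ 1). Then: (i) max_{t∈[0,1]} max{h(γ_ε(t)), 0} = ε²; and (ii) every absolutely continuous y = (y₁, y₂) : [0,1] → ℝ² with y(0) = (−ε, ε²), y₂' = 0 a.e., |y₁'| ≤ 1 a.e., and y(t) ∈ C for all t ∈ [0,1], satisfies sup_{t∈[0,1]} ‖y(t) − γ_ε(t)‖ ≥ 1. Consequently no estimate of the form ‖y − γ_ε‖_{L∞} ≤ θ(d) with θ(d) → 0 as d → 0, where d is the maximal constraint violation, can hold for this system. -/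
open MeasureTheory

/-- **Counterexample: failure of the inward pointing condition.**
For the system `(ẋ₁, ẋ₂) = (u, 0)`, `u ∈ [−1,1]`, with constraint
`C = {x₂ ≤ x₁²}` (i.e. `h(x₁,x₂) = x₂ − x₁² ≤ 0`), and the reference trajectory
`γ_ε(t) = (−ε + t, ε²)` on `[0,1]` with `ε ∈ (0, 1/2)`:
(i) the maximal constraint violation `max_{t∈[0,1]} max{h(γ_ε(t)), 0}` equals `ε²`;
(ii) every absolutely continuous feasible trajectory `y = (y₁, y₂)` of the system
starting at `(−ε, ε²)` — i.e. `y₂' = 0` a.e., `|y₁'| ≤ 1` a.e., and `y(t) ∈ C` on `[0,1]`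
— stays at distance at least `1` from `γ_ε` at some time. Hence no estimate of the
distance to a neighboring feasible trajectory vanishing with the violation can hold. -/
theorem no_neighboring_feasible_trajectory (ε : ℝ) (hε : ε ∈ Set.Ioo (0:ℝ) (1 / 2)) :
    IsGreatest ((fun t => max (ε ^ 2 - (-ε + t) ^ 2) 0) '' Set.Icc (0:ℝ) 1) (ε ^ 2) ∧
    ∀ y₁ y₂ : ℝ → ℝ,
      y₁ 0 = -ε → y₂ 0 = ε ^ 2 →
      ContinuousOn y₁ (Set.Icc 0 1) → ContinuousOn y₂ (Set.Icc 0 1) →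
      (∀ t ∈ Set.Icc (0:ℝ) 1, y₁ t = y₁ 0 + ∫ s in (0:ℝ)..t, deriv y₁ s) →
      (∀ t ∈ Set.Icc (0:ℝ) 1, y₂ t = y₂ 0 + ∫ s in (0:ℝ)..t, deriv y₂ s) →
      (∀ᵐ s : ℝ, s ∈ Set.Icc (0:ℝ) 1 → |deriv y₁ s| ≤ 1 ∧ deriv y₂ s = 0) →
      (∀ t ∈ Set.Icc (0:ℝ) 1, y₂ t ≤ (y₁ t) ^ 2) →
      ∃ t ∈ Set.Icc (0:ℝ) 1,
        1 ≤ Real.sqrt ((y₁ t - (-ε + t)) ^ 2 + (y₂ t - ε ^ 2) ^ 2) := by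
  obtain ⟨hε0, hε2⟩ := hε
  constructor
  · constructor
    · exact ⟨ε, ⟨le_of_lt hε0, by linarith⟩, by simp [sq_nonneg ε]⟩
    · rintro v ⟨t, ht, rfl⟩
      exact max_le (by nlinarith [sq_nonneg (-ε + t)]) (sq_nonneg ε)
  · intro y₁ y₂ h10 h20 hc1 hc2 hint1 hint2 hae hfeas
    -- y₂ is constant equal to ε²
    have hy2 : ∀ t ∈ Set.Icc (0:ℝ) 1, y₂ t = ε ^ 2 := by
      intro t ht
      have hzero : (∫ s in (0:ℝ)..t, deriv y₂ s) = ∫ s in (0:ℝ)..t, (0:ℝ) := by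
        apply intervalIntegral.integral_congr_ae
        filter_upwards [hae] with s hs hsI
        have : s ∈ Set.Icc (0:ℝ) 1 := by
          rw [Set.uIoc_of_le ht.1] at hsI
          exact ⟨le_of_lt hsI.1, le_trans hsI.2 ht.2⟩
        exact (hs this).2
      rw [hint2 t ht, h20, hzero]
      simp
    -- |y₁ t| ≥ ε for all t
    have habs : ∀ t ∈ Set.Icc (0:ℝ) 1, ε ^ 2 ≤ (y₁ t) ^ 2 := by
      intro t ht
      calc ε ^ 2 = y₂ t := (hy2 t ht).symm
        _ ≤ (y₁ t) ^ 2 := hfeas t ht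
    -- y₁ 1 ≤ -ε
    have h1mem : (1:ℝ) ∈ Set.Icc (0:ℝ) 1 := ⟨zero_le_one, le_refl 1⟩
    have hy11 : y₁ 1 ≤ -ε := by
      by_contra hcon
      push_neg at hcon
      have hpos : 0 < y₁ 1 := by
        rcases lt_trichotomy (y₁ 1) 0 with h | h | h
        · have := habs 1 h1mem
          nlinarith
        · have := habs 1 h1mem; nlinarith
        · exact h
      have := intermediate_value_Icc (zero_le_one) hc1
      have h0mem : (0:ℝ) ∈ Set.Icc (y₁ 0) (y₁ 1) := by
        rw [h10]; exact ⟨by linarith, le_of_lt hpos⟩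
      obtain ⟨t, ht, hyt⟩ := this h0mem
      have := habs t ht
      rw [hyt] at this
      nlinarith
    refine ⟨1, h1mem, ?_⟩
    have key : (1:ℝ) ≤ (y₁ 1 - (-ε + 1)) ^ 2 + (y₂ 1 - ε ^ 2) ^ 2 := by
      have := hy2 1 h1mem
      nlinarith [sq_nonneg (y₁ 1 - (-ε + 1))]
    calc (1:ℝ) = Real.sqrt 1 := (Real.sqrt_one).symm
      _ ≤ _ := Real.sqrt_le_sqrt key
end
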